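/- arXiv:1911.06951 — 3 statements merged into one kernel-verified Lean document; each statement's English description precedes it below -/
import Mathlib

section
/- The variance of the signed-bucket estimator X_k = G_k · T(H_k) is at most (1/B) · Σ_{j∈ι, j≠k} (v j)². (This is the content of the paper's claim that the variance of the counter T[j][H_j(k)] is at most 1/B times the sum of the squared round-trip times across all flows.) -/
/-!
Since `G k ^ 2 = 1`, the estimator splits as `X k = v k + G k * S` with
`S = ∑_{j ≠ k} G j * v j * 1[H j = H k]`, so `Var (X k) ≤ 𝔼[(X k - v k)^2] = 𝔼[S^2]`. The signs
are centred, pairwise independent and independent of the hashes, so every cross term of `S^2`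
vanishes and `𝔼[S^2] = ∑_{j ≠ k} v j ^ 2 * P(H j = H k)`. A collision of two independent hashes,
one of them uniform, has probability exactly `1 / B`.
-/

open MeasureTheory ProbabilityTheory Finset

namespace ProbabilityTheory

variable {Ω : Type*} [MeasurableSpace Ω] {μ : Measure Ω}

theorem integral_eq_zero_of_uniform_sign [IsProbabilityMeasure μ] {ε : Ω → ℝ} (hε : Measurable ε)
    (hsign : ∀ ω, ε ω = 1 ∨ ε ω = -1) (hhalf : μ {ω | ε ω = 1} = 1 / 2) :
    ∫ ω, ε ω ∂μ = 0 := by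
  have hA : MeasurableSet {ω | ε ω = 1} := hε (measurableSet_singleton 1)
  have hrep : ε = fun ω => Set.indicator {ω | ε ω = 1} (fun _ => (2 : ℝ)) ω - 1 := by
    ext ω
    rcases hsign ω with h | h <;> simp [Set.indicator_apply, h] <;> norm_num
  rw [hrep, integral_sub ((integrable_const _).indicator hA) (integrable_const _),
    integral_indicator_const _ hA, measureReal_def, hhalf]
  norm_num

theorem IndepFun.measure_eq_eq_of_uniform [IsProbabilityMeasure μ] {α : Type*} [Fintype α]
    [MeasurableSpace α] [MeasurableSingletonClass α] {X Y : Ω → α} (hXY : IndepFun X Y μ)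
    (hX : Measurable X) (hY : Measurable Y)
    (hunif : ∀ a, μ {ω | X ω = a} = (Fintype.card α : ENNReal)⁻¹) :
    μ {ω | X ω = Y ω} = (Fintype.card α : ENNReal)⁻¹ := by
  have hfiber : {ω | X ω = Y ω} = ⋃ a, X ⁻¹' {a} ∩ Y ⁻¹' {a} := by
    ext ω; simp [eq_comm]
  have hdisj : Pairwise (Function.onFun Disjoint fun a => X ⁻¹' {a} ∩ Y ⁻¹' {a}) :=
    fun a b hab => Set.disjoint_left.mpr fun ω ha hb => hab (ha.1.symm.trans hb.1)
  rw [hfiber, measure_iUnion hdisj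
      fun a => (hX (measurableSet_singleton a)).inter (hY (measurableSet_singleton a)),
    tsum_fintype]
  calc ∑ a, μ (X ⁻¹' {a} ∩ Y ⁻¹' {a})
      = ∑ a, (Fintype.card α : ENNReal)⁻¹ * μ (Y ⁻¹' {a}) := by
        refine sum_congr rfl fun a _ => ?_
        rw [hXY.measure_inter_preimage_eq_mul _ _ (measurableSet_singleton a)
          (measurableSet_singleton a)]
        exact congrArg (· * _) (hunif a)
    _ = (Fintype.card α : ENNReal)⁻¹ := by
        rw [← mul_sum, sum_measure_preimage_singleton _ fun a _ => hY (measurableSet_singleton a)]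
        simp

theorem IndepFun.integral_ite_eq_of_uniform [IsProbabilityMeasure μ]
    {α : Type*} [Fintype α] [DecidableEq α] [MeasurableSpace α] [MeasurableSingletonClass α]
    {X Y : Ω → α} (hXY : IndepFun X Y μ) (hX : Measurable X) (hY : Measurable Y)
    (hunif : ∀ a, μ {ω | X ω = a} = (Fintype.card α : ENNReal)⁻¹) (c : ℝ) :
    ∫ ω, (if X ω = Y ω then c else 0) ∂μ = (Fintype.card α : ℝ)⁻¹ * c := by
  have h := integral_indicator_const (μ := μ) c (measurableSet_eq_fun hX hY)
  simp only [Set.indicator_apply, Set.mem_ofPred_eq] at h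
  rw [h, measureReal_def, hXY.measure_eq_eq_of_uniform hX hY hunif]
  simp

theorem integral_sq_sum_sign_mul {ι β : Type*} [MeasurableSpace β] {ε : ι → Ω → ℝ}
    {Z : Ω → β} {f : ι → β → ℝ} (s : Finset ι) (hε : ∀ j, Measurable (ε j))
    (hsign : ∀ j ω, ε j ω = 1 ∨ ε j ω = -1)
    (hmean : ∀ j, ∫ ω, ε j ω ∂μ = 0) (hpair : ∀ j l, j ≠ l → IndepFun (ε j) (ε l) μ)
    (hind : IndepFun (fun ω j => ε j ω) Z μ) (hf : ∀ j, Measurable (f j))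
    (hf2 : ∀ j, MemLp (fun ω => f j (Z ω)) 2 μ) :
    ∫ ω, (∑ j ∈ s, ε j ω * f j (Z ω)) ^ 2 ∂μ = ∑ j ∈ s, ∫ ω, f j (Z ω) ^ 2 ∂μ := by
  classical
  have hsq : ∀ j ω, ε j ω * ε j ω = 1 := fun j ω => by rcases hsign j ω with h | h <;> simp [h]
  have hterm : ∀ j l, ∫ ω, ε j ω * ε l ω * (f j (Z ω) * f l (Z ω)) ∂μ
      = if j = l then ∫ ω, f j (Z ω) ^ 2 ∂μ else 0 := by
    intro j l
    split_ifs with hjl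
    · subst hjl
      simp only [hsq, one_mul, sq]
    · have hprod : IndepFun (fun ω => ε j ω * ε l ω) (fun ω => f j (Z ω) * f l (Z ω)) μ :=
        hind.comp ((measurable_pi_apply j).mul (measurable_pi_apply l)) ((hf j).mul (hf l))
      rw [hprod.integral_fun_mul_eq_mul_integral ((hε j).mul (hε l)).aestronglyMeasurable
        ((hf2 j).aestronglyMeasurable.mul (hf2 l).aestronglyMeasurable),
        (hpair j l hjl).integral_fun_mul_eq_mul_integral (hε j).aestronglyMeasurable
          (hε l).aestronglyMeasurable, hmean j, zero_mul, zero_mul]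
  have hint : ∀ j l, Integrable (fun ω => ε j ω * ε l ω * (f j (Z ω) * f l (Z ω))) μ := by
    intro j l
    refine ((hf2 j).integrable_mul (hf2 l)).bdd_mul (c := 1)
      ((hε j).mul (hε l)).aestronglyMeasurable (ae_of_all _ fun ω => ?_)
    rcases hsign j ω with h | h <;> rcases hsign l ω with h' | h' <;> simp [h, h']
  calc ∫ ω, (∑ j ∈ s, ε j ω * f j (Z ω)) ^ 2 ∂μ
      = ∫ ω, ∑ j ∈ s, ∑ l ∈ s, ε j ω * ε l ω * (f j (Z ω) * f l (Z ω)) ∂μ := by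
        congr 1; ext ω
        rw [sq, sum_mul_sum]
        exact sum_congr rfl fun j _ => sum_congr rfl fun l _ => by ring
    _ = ∑ j ∈ s, ∑ l ∈ s, if j = l then ∫ ω, f j (Z ω) ^ 2 ∂μ else 0 := by
        rw [integral_finsetSum _ fun j _ => integrable_finsetSum _ fun l _ => hint j l]
        refine sum_congr rfl fun j _ => ?_
        rw [integral_finsetSum _ fun l _ => hint j l]
        exact sum_congr rfl fun l _ => hterm j l
    _ = ∑ j ∈ s, ∫ ω, f j (Z ω) ^ 2 ∂μ := sum_congr rfl fun j hj => by simp [hj]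

end ProbabilityTheory

theorem stmt1_general {Ω : Type*} [MeasurableSpace Ω] (μ : Measure Ω) [IsProbabilityMeasure μ]
    {ι : Type*} [Fintype ι] [DecidableEq ι] (B : ℕ) (v : ι → ℝ)
    (G : ι → Ω → ℝ) (H : ι → Ω → Fin B)
    (hGmeas : ∀ j, Measurable (G j)) (hHmeas : ∀ j, Measurable (H j))
    (hGval : ∀ j ω, G j ω = 1 ∨ G j ω = -1)
    (hGunif : ∀ j, μ {ω | G j ω = 1} = 1 / 2)
    (hHunif : ∀ j b, μ {ω | H j ω = b} = (B : ENNReal)⁻¹)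
    (hGpair : ∀ j k : ι, j ≠ k → IndepFun (G j) (G k) μ)
    (hHpair : ∀ j k : ι, j ≠ k → IndepFun (H j) (H k) μ)
    (hGH : IndepFun (fun ω j => G j ω) (fun ω j => H j ω) μ)
    (k : ι) :
    variance (fun ω => G k ω * ∑ j, v j * G j ω * (if H j ω = H k ω then (1 : ℝ) else 0)) μ
      ≤ (B : ℝ)⁻¹ * ∑ j ∈ Finset.univ.erase k, v j ^ 2 := by
  set X := fun ω => G k ω * ∑ j, v j * G j ω * (if H j ω = H k ω then (1 : ℝ) else 0)
  set f : ι → (ι → Fin B) → ℝ := fun j z => if z j = z k then v j else 0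
  have hX : Measurable X := (hGmeas k).mul <| measurable_sum _ fun j _ =>
    (measurable_const.mul (hGmeas j)).mul <|
      Measurable.ite (measurableSet_eq_fun (hHmeas j) (hHmeas k)) measurable_const measurable_const
  have hGk : ∀ ω, G k ω ^ 2 = 1 := fun ω => by rcases hGval k ω with h | h <;> simp [h]
  have hdecomp : ∀ ω, X ω - v k = G k ω * ∑ j ∈ univ.erase k, G j ω * f j fun i => H i ω := by
    intro ω
    simp only [X]
    rw [← add_sum_erase _ _ (mem_univ k), if_pos rfl, mul_add, mul_sum, mul_sum,
      sum_congr rfl fun j _ => show G k ω * (v j * G j ω * _)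
        = G k ω * (G j ω * f j fun i => H i ω) by simp only [f]; split_ifs <;> ring]
    linear_combination v k * hGk ω
  calc variance X μ
      = variance (fun ω => X ω - v k) μ := (variance_sub_const hX.aestronglyMeasurable _).symm
    _ ≤ ∫ ω, (X ω - v k) ^ 2 ∂μ := variance_le_expectation_sq (hX.sub_const _).aestronglyMeasurable
    _ = ∫ ω, (∑ j ∈ univ.erase k, G j ω * f j fun i => H i ω) ^ 2 ∂μ := by
        simp only [hdecomp, mul_pow, hGk, one_mul]
    _ = ∑ j ∈ univ.erase k, ∫ ω, f j (fun i => H i ω) ^ 2 ∂μ :=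
        integral_sq_sum_sign_mul _ hGmeas hGval
          (fun j => integral_eq_zero_of_uniform_sign (hGmeas j) (hGval j) (hGunif j)) hGpair hGH
          (fun _ => .of_discrete) fun j =>
            (MemLp.of_discrete (f := f j)).comp_of_map (measurable_pi_iff.mpr hHmeas).aemeasurable
    _ = (B : ℝ)⁻¹ * ∑ j ∈ univ.erase k, v j ^ 2 := by
        rw [mul_sum]
        refine sum_congr rfl fun j hj => ?_
        simp only [f, ite_pow, zero_pow two_ne_zero]
        simpa using (hHpair j k (ne_of_mem_erase hj)).integral_ite_eq_of_uniform (hHmeas j)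
          (hHmeas k) (by simpa using hHunif j) (v j ^ 2)

/-- The variance of the signed-bucket estimator `X k = G k * T (H k)` is at most
`(1/B) * Σ_{j ≠ k} (v j)^2`. -/
theorem stmt1 {Ω : Type*} [MeasurableSpace Ω] (μ : Measure Ω) [IsProbabilityMeasure μ]
    {ι : Type*} [Fintype ι] [DecidableEq ι] (B : ℕ) (hB : 1 ≤ B) (v : ι → ℝ)
    (G : ι → Ω → ℝ) (H : ι → Ω → Fin B)
    (hGmeas : ∀ j, Measurable (G j)) (hHmeas : ∀ j, Measurable (H j))
    (hGval : ∀ j ω, G j ω = 1 ∨ G j ω = -1)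
    (hGunif : ∀ j, μ {ω | G j ω = 1} = 1 / 2)
    (hHunif : ∀ j b, μ {ω | H j ω = b} = (B : ENNReal)⁻¹)
    (hGpair : ∀ j k : ι, j ≠ k → IndepFun (G j) (G k) μ)
    (hHpair : ∀ j k : ι, j ≠ k → IndepFun (H j) (H k) μ)
    (hGH : IndepFun (fun ω j => G j ω) (fun ω j => H j ω) μ)
    (k : ι) :
    variance (fun ω => G k ω * ∑ j, v j * G j ω * (if H j ω = H k ω then (1 : ℝ) else 0)) μ
      ≤ (B : ℝ)⁻¹ * ∑ j ∈ Finset.univ.erase k, v j ^ 2 :=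
  stmt1_general μ B v G H hGmeas hHmeas hGval hGunif hHunif hGpair hHpair hGH k
end

section
/- Let N ≥ 1, let v : Fin N → ℝ be nonnegative, and suppose some index i satisfies v i > Σ_{j ≠ i} v j. Then for every bit position k, the total value of the indices whose k-th binary bit agrees with that of i strictly exceeds the total value of the indices whose k-th bit disagrees: Σ_{j : testBit j k = testBit i k} v j > Σ_{j : testBit j k ≠ testBit i k} v j. Consequently, comparing these two sums for k = 0, 1, …, ⌈log₂ N⌉ − 1 determines every bit of i, and hence i itself. (This is the bit-by-bit identification step in the paper's Theorem 1: partitioning flows into sub-buckets by the parity of each bit of the index and comparing the function values on each pair of sub-buckets reveals the identity of the dominant flow.) -/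
open Finset

theorem sum_filter_not_lt_sum_filter_of_dominant {α M : Type*} [Fintype α] [DecidableEq α]
    [AddCommMonoid M] [PartialOrder M] [IsOrderedAddMonoid M] {v : α → M} (hv : ∀ j, 0 ≤ v j)
    {i : α} (hdom : ∑ j ∈ univ.erase i, v j < v i) (p : α → Prop) [DecidablePred p]
    (hi : p i) :
    ∑ j ∈ univ.filter (fun j => ¬ p j), v j < ∑ j ∈ univ.filter p, v j := by
  have h_compl_le : ∑ j ∈ univ.filter (fun j => ¬ p j), v j ≤ ∑ j ∈ univ.erase i, v j :=
    sum_le_sum_of_subset_of_nonneg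
      (fun j hj => mem_erase.2 ⟨fun hji => (mem_filter.1 hj).2 (hji ▸ hi), mem_univ j⟩)
      (fun j _ _ => hv j)
  have h_le_class : v i ≤ ∑ j ∈ univ.filter p, v j :=
    single_le_sum (fun j _ => hv j) (mem_filter.2 ⟨mem_univ i, hi⟩)
  exact h_compl_le.trans_lt (hdom.trans_le h_le_class)

theorem Nat.eq_of_testBit_eq_of_lt_two_pow {x y n : ℕ} (hx : x < 2 ^ n) (hy : y < 2 ^ n)
    (h : ∀ k < n, x.testBit k = y.testBit k) : x = y := by
  refine Nat.eq_of_testBit_eq fun k => ?_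
  by_cases hk : k < n
  · exact h k hk
  · have h_pow : 2 ^ n ≤ 2 ^ k := Nat.pow_le_pow_right two_pos (not_lt.1 hk)
    rw [Nat.testBit_lt_two_pow (hx.trans_le h_pow), Nat.testBit_lt_two_pow (hy.trans_le h_pow)]

theorem Fin.eq_of_testBit_eq_of_lt_clog {N : ℕ} {a b : Fin N}
    (h : ∀ k < Nat.clog 2 N, a.val.testBit k = b.val.testBit k) : a = b := by
  have h_pow : N ≤ 2 ^ Nat.clog 2 N := Nat.le_pow_clog one_lt_two N
  exact Fin.ext <| Nat.eq_of_testBit_eq_of_lt_two_pow (a.isLt.trans_le h_pow)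
    (b.isLt.trans_le h_pow) h

theorem stmt7_general (N : ℕ) (v : Fin N → ℝ) (hv : ∀ j, 0 ≤ v j) (i : Fin N)
    (hdom : ∑ j ∈ Finset.univ.erase i, v j < v i) :
    (∀ k : ℕ,
      ∑ j ∈ Finset.univ.filter (fun j : Fin N =>
          Nat.testBit j.val k ≠ Nat.testBit i.val k), v j
        < ∑ j ∈ Finset.univ.filter (fun j : Fin N =>
            Nat.testBit j.val k = Nat.testBit i.val k), v j) ∧
    (∀ i' : Fin N,
      (∀ k : ℕ, k < Nat.clog 2 N → Nat.testBit i'.val k = Nat.testBit i.val k) → i' = i) :=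
  ⟨fun k => sum_filter_not_lt_sum_filter_of_dominant hv hdom _ rfl,
    fun _ => Fin.eq_of_testBit_eq_of_lt_clog⟩

/-- Bit-by-bit identification of a dominant index: if `v i` exceeds the sum of all other
(nonnegative) values, then for every bit position `k` the total value of indices agreeing
with `i` on bit `k` strictly exceeds the total value of indices disagreeing with `i` on
bit `k`; consequently the bits (below `⌈log₂ N⌉`) determine `i` itself. -/
theorem stmt7 (N : ℕ) (hN : 1 ≤ N) (v : Fin N → ℝ) (hv : ∀ j, 0 ≤ v j) (i : Fin N)
    (hdom : ∑ j ∈ Finset.univ.erase i, v j < v i) :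
    (∀ k : ℕ,
      ∑ j ∈ Finset.univ.filter (fun j : Fin N =>
          Nat.testBit j.val k ≠ Nat.testBit i.val k), v j
        < ∑ j ∈ Finset.univ.filter (fun j : Fin N =>
            Nat.testBit j.val k = Nat.testBit i.val k), v j) ∧
    (∀ i' : Fin N,
      (∀ k : ℕ, k < Nat.clog 2 N → Nat.testBit i'.val k = Nat.testBit i.val k) → i' = i) :=
  stmt7_general N v hv i hdom
end

section
/- Consider the deterministic counter-based (Misra–Gries style) algorithm with r ≥ 1 counters processing a stream (finite list) of m items from a type α: maintain a finite map A from keys in α to positive integer counters with at most r keys; on arrival of item a, if a is a key of A, increment its counter; else if A has fewer than r keys, insert a with counter 1; else decrement every counter by 1 and delete keys whose counter reaches 0. Then after processing the whole stream, every element a whose number of occurrences in the stream exceeds m/(r+1) is among the keys of the final map. In particular, for 0 < ε ≤ 1, with r = ⌈1/ε⌉ counters every element occurring at least ε·m times (m ≥ 1) is among the final keys. (This is the guarantee underlying the paper's Theorem for Algorithm 3: with 1/ε counters, any flow with at least ε·P out-of-order packets will be output by the data structure at the end.) -/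
/-- One step of the Misra–Gries style counter algorithm with `r` counters: on arrival of
item `a`, if `a` is already a key, or there are fewer than `r` keys, increment (or insert)
`a`'s counter; otherwise decrement every counter by one (keys whose counter reaches `0`
disappear from the support). -/
noncomputable def mgStep {α : Type*} [DecidableEq α] (r : ℕ) (A : α →₀ ℕ) (a : α) : α →₀ ℕ :=
  if a ∈ A.support ∨ A.support.card < r then A + Finsupp.single a 1
  else A.mapRange (· - 1) (Nat.zero_sub 1)

/-- Running the Misra–Gries algorithm with `r` counters over a finite stream, starting from
the empty map. -/
noncomputable def mgRun {α : Type*} [DecidableEq α] (r : ℕ) (stream : List α) : α →₀ ℕ :=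
  stream.foldl (mgStep r) 0

lemma mg_card_le_weight {α : Type*} [DecidableEq α] (A : α →₀ ℕ) :
    A.support.card ≤ A.sum fun _ n => n := by
  rw [Finsupp.sum, Finset.card_eq_sum_ones]
  exact Finset.sum_le_sum fun x hx => Nat.one_le_iff_ne_zero.2 (Finsupp.mem_support_iff.1 hx)

lemma mg_weight_dec {α : Type*} [DecidableEq α] (A : α →₀ ℕ) :
    ((A.mapRange (· - 1) (Nat.zero_sub 1)).sum fun _ n => n) + A.support.card
      = A.sum fun _ n => n := by
  rw [Finsupp.sum_mapRange_index (by simp), Finsupp.sum, Finsupp.sum,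
    Finset.card_eq_sum_ones, ← Finset.sum_add_distrib]
  exact Finset.sum_congr rfl fun x hx =>
    Nat.sub_add_cancel (Nat.one_le_iff_ne_zero.2 (Finsupp.mem_support_iff.1 hx))

lemma mg_weight_inc {α : Type*} [DecidableEq α] (A : α →₀ ℕ) (b : α) :
    ((A + Finsupp.single b 1).sum fun _ n => n) = (A.sum fun _ n => n) + 1 := by
  rw [Finsupp.sum_add_index' (by simp) (by intros; rfl), Finsupp.sum_single_index rfl]

lemma mg_inv {α : Type*} [DecidableEq α] (r : ℕ) (hr : 1 ≤ r) (l : List α) :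
    (mgRun r l).support.card ≤ r ∧
    ∀ a, (r + 1) * l.count a + ((mgRun r l).sum fun _ n => n)
        ≤ l.length + (r + 1) * (mgRun r l) a := by
  induction l using List.reverseRecOn with
  | nil => simp [mgRun]
  | append_singleton l b ih =>
    obtain ⟨hcard, hinv⟩ := ih
    have hrun : mgRun r (l ++ [b]) = mgStep r (mgRun r l) b := by
      simp [mgRun, List.foldl_append]
    set A := mgRun r l with hA
    rw [hrun]
    unfold mgStep
    split
    case isTrue h =>
      -- increment case
      have hsupp : (A + Finsupp.single b 1).support ⊆ insert b A.support := by
        refine Finsupp.support_add.trans ?_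
        rw [Finsupp.support_single_ne_zero _ one_ne_zero]
        intro x hx
        simp at hx ⊢
        tauto
      constructor
      · rcases h with h | h
        · calc (A + Finsupp.single b 1).support.card ≤ (insert b A.support).card :=
                Finset.card_le_card hsupp
            _ = A.support.card := by rw [Finset.insert_eq_self.2 h]
            _ ≤ r := hcard
        · calc (A + Finsupp.single b 1).support.card ≤ (insert b A.support).card :=
                Finset.card_le_card hsupp
            _ ≤ A.support.card + 1 := Finset.card_insert_le _ _
            _ ≤ r := h
      · intro a
        have hcnt : (l ++ [b]).count a = l.count a + if b = a then 1 else 0 := by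
          simp [List.count_append, List.count_singleton']
        have happ : ((A + Finsupp.single b 1 : α →₀ ℕ)) a = A a + if b = a then 1 else 0 := by
          rw [Finsupp.add_apply, Finsupp.single_apply]
        rw [hcnt, happ, mg_weight_inc, List.length_append, List.length_singleton,
          Nat.mul_add, Nat.mul_add]
        have := hinv a
        split_ifs <;> simp only [Nat.mul_one, Nat.mul_zero, Nat.add_zero] <;> omega
    case isFalse h =>
      push_neg at h
      obtain ⟨hbns, hrc⟩ := h
      have hcardeq : A.support.card = r := le_antisymm hcard hrc
      have hwge : r ≤ A.sum fun _ n => n := hcardeq ▸ mg_card_le_weight A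
      have hwdec := mg_weight_dec A
      have hAb : A b = 0 := Finsupp.notMem_support_iff.1 hbns
      constructor
      · calc (A.mapRange (· - 1) (Nat.zero_sub 1)).support.card
            ≤ A.support.card := Finset.card_le_card (Finsupp.support_mapRange)
          _ ≤ r := hcard
      · intro a
        have hcnt : (l ++ [b]).count a = l.count a + if b = a then 1 else 0 := by
          simp [List.count_append, List.count_singleton']
        have happ : (A.mapRange (· - 1) (Nat.zero_sub 1)) a = A a - 1 :=
          Finsupp.mapRange_apply
        rw [hcnt, happ, List.length_append, List.length_singleton]
        have hia := hinv a
        by_cases hba : b = a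
        · subst hba
          rw [if_pos rfl, hAb] at *
          rw [Nat.mul_add, Nat.mul_one]
          simp only [Nat.mul_zero, Nat.add_zero] at hia
          omega
        · rw [if_neg hba]
          simp only [Nat.add_zero]
          by_cases hA1 : 1 ≤ A a
          · have hmul : (r + 1) * A a = (r + 1) * (A a - 1) + (r + 1) := by
              conv_lhs => rw [← Nat.sub_add_cancel hA1]
              rw [Nat.mul_add, Nat.mul_one]
            rw [hmul] at hia
            omega
          · have hA0 : A a = 0 := by omega
            rw [hA0] at hia
            have : A a - 1 = 0 := by omega
            rw [this]
            simp only [Nat.mul_zero, Nat.add_zero] at hia ⊢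
            omega


/-- Misra–Gries guarantee: every element occurring more than `m/(r+1)` times in a stream of
length `m` is among the keys of the final map; in particular, with `r = ⌈1/ε⌉` counters,
every element occurring at least `ε·m` times (for `m ≥ 1`) is among the final keys. -/
theorem stmt11 {α : Type*} [DecidableEq α] (r : ℕ) (hr : 1 ≤ r) (stream : List α) :
    (∀ a : α, (stream.length : ℝ) / (r + 1) < (stream.count a : ℝ) →
      a ∈ (mgRun r stream).support) ∧
    (∀ ε : ℝ, 0 < ε → ε ≤ 1 → r = ⌈1 / ε⌉₊ → 1 ≤ stream.length →
      ∀ a : α, ε * (stream.length : ℝ) ≤ (stream.count a : ℝ) →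
        a ∈ (mgRun r stream).support) := by
  obtain ⟨hcard, hinv⟩ := mg_inv r hr stream
  have key : ∀ a : α, (stream.length : ℝ) / (r + 1) < (stream.count a : ℝ) →
      a ∈ (mgRun r stream).support := by
    intro a ha
    rw [div_lt_iff₀ (by positivity)] at ha
    have hnat : stream.length < stream.count a * (r + 1) := by exact_mod_cast ha
    rw [Finsupp.mem_support_iff]
    intro hz
    have := hinv a
    rw [hz, Nat.mul_zero, Nat.add_zero, Nat.mul_comm] at this
    omega
  refine ⟨key, fun ε hε hε1 hre hm a ha => key a ?_⟩
  have h1 : (1 : ℝ) / ε ≤ r := by rw [hre]; exact_mod_cast Nat.le_ceil (1 / ε)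
  have hεr : 1 ≤ ε * r := by
    rw [div_le_iff₀ hε] at h1
    linarith [mul_comm ε (r : ℝ)]
  have hm1 : (1 : ℝ) ≤ stream.length := by exact_mod_cast hm
  have hlt : (stream.length : ℝ) / (r + 1) < ε * stream.length := by
    rw [div_lt_iff₀ (by positivity)]
    nlinarith
  exact lt_of_lt_of_le hlt ha
end
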